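/- Let $P$ be the uniform Cantor distribution with ratio $r\in(0,1/2)$, and define $V_n(P)=\inf\{\int\min_{a\in\alpha}(x-a)^2dP:\,\mathrm{card}(\alpha)\le n\}$. Then for all $n\ge1$ and $1\le j\le n$, $V_n(P)\le\tfrac12 r^2\big(V_j(P)+V_{n-j}(P)\big)$ whenever $j,n-j\ge1$, provided the sets $S_1(\alpha_j)$ and $S_2(\alpha_{n-j})$ built from near-optimal sets $\alpha_j,\alpha_{n-j}\subset[0,1]$ are used as candidates. -/

import Mathlib

open MeasureTheory
open scoped ENNReal

noncomputable def Smap (r : ℝ) (i : Fin 2) : ℝ → ℝ :=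
  fun x => if i = 0 then r * x else r * x + (1 - r)

noncomputable def Sword (r : ℝ) (σ : List (Fin 2)) : ℝ → ℝ :=
  σ.foldr (fun i g => Smap r i ∘ g) id

noncomputable def quantErr (P : Measure ℝ) (n : ℕ) : ℝ :=
  sInf {e : ℝ | ∃ α : Finset ℝ, α.Nonempty ∧ α.card ≤ n ∧
    e = ∫ x, sInf ((fun a => (x - a)^2) '' (α : Set ℝ)) ∂P}

open Set Filter Topology

/-!
With `S₁ = Smap r 0` and `S₂ = Smap r 1`, gluing a `j`-point codebook `α` and an `(n-j)`-point
codebook `β` gives the `n`-point codebook `S₁ α ∪ S₂ β`. Since `P` is the average of its two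
images under the similarities `Sᵢ` of ratio `r`, squared distances scale by `r²` and the error of
the glued codebook is at most `r²/2` times the sum of the errors of `α` and `β`; taking `α` and `β`
near-optimal gives the bound. The integrands are integrable because `P` lives on `[0,1]`: the
excess `|x - 1/2| - 1/2` over `[0,1]` shrinks by the factor `r` under each `Sᵢ`, so its
superlevel sets have measure zero.
-/

theorem measure_setOf_pos_eq_zero_of_le_div {Ω : Type*} [MeasurableSpace Ω] (μ : Measure Ω)
    [IsFiniteMeasure μ] {v : Ω → ℝ} (hv : Measurable v) {c : ℝ} (hc0 : 0 < c) (hc1 : c < 1)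
    (h : ∀ t, 0 < t → μ {x | t < v x} ≤ μ {x | t / c < v x}) : μ {x | 0 < v x} = 0 := by
  set f : ℝ → ℝ≥0∞ := fun t => μ {x | t < v x}
  have hf_tendsto : Tendsto f atTop (𝓝 0) := by
    have hempty : ⋂ t : ℝ, {x | t < v x} = ∅ :=
      eq_empty_of_forall_notMem fun x hx => lt_irrefl (v x) (mem_iInter.1 hx (v x))
    have := tendsto_measure_iInter_atTop (μ := μ) (s := fun t : ℝ => {x | t < v x})
      (fun t => (measurableSet_lt measurable_const hv).nullMeasurableSet)
      (fun s t hst x hx => lt_of_le_of_lt hst hx) ⟨0, measure_ne_top _ _⟩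
    rwa [hempty, measure_empty] at this
  have hf_zero : ∀ t, 0 < t → f t = 0 := by
    intro t ht
    have hiter : ∀ k : ℕ, f t ≤ f (t / c ^ k) := by
      intro k
      induction k with
      | zero => simp
      | succ k ih =>
        calc f t ≤ f (t / c ^ k) := ih
          _ ≤ f (t / c ^ k / c) := h _ (by positivity)
          _ = f (t / c ^ (k + 1)) := by rw [pow_succ, div_div]
    have hlim : Tendsto (fun k : ℕ => t / c ^ k) atTop atTop := by
      simp_rw [div_eq_mul_inv, ← inv_pow]
      exact (tendsto_pow_atTop_atTop_of_one_lt (one_lt_inv₀ hc0 |>.2 hc1)).const_mul_atTop ht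
    exact nonpos_iff_eq_zero.1 (ge_of_tendsto' (hf_tendsto.comp hlim) hiter)
  have hunion : {x | 0 < v x} = ⋃ n : ℕ, {x | 1 / ((n : ℝ) + 1) < v x} := by
    ext x
    simp only [mem_ofPred_eq, mem_iUnion]
    exact ⟨exists_nat_one_div_lt, fun ⟨n, hn⟩ => lt_trans (by positivity) hn⟩
  rw [hunion]
  exact measure_iUnion_null fun n => hf_zero _ (by positivity)

noncomputable def minSqDist (α : Finset ℝ) (x : ℝ) : ℝ :=
  sInf ((fun a => (x - a) ^ 2) '' (α : Set ℝ))

theorem minSqDist_eq_inf' {α : Finset ℝ} (hα : α.Nonempty) (x : ℝ) :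
    minSqDist α x = α.inf' hα fun a => (x - a) ^ 2 :=
  (Finset.inf'_eq_csInf_image α hα _).symm

theorem continuous_minSqDist {α : Finset ℝ} (hα : α.Nonempty) : Continuous (minSqDist α) := by
  simp_rw [funext (minSqDist_eq_inf' hα)]
  exact Continuous.finset_inf'_apply hα fun a _ => by fun_prop

theorem minSqDist_nonneg (α : Finset ℝ) (x : ℝ) : 0 ≤ minSqDist α x :=
  Real.sInf_nonneg <| by rintro _ ⟨a, -, rfl⟩; positivity

theorem minSqDist_le {α : Finset ℝ} {a : ℝ} (ha : a ∈ α) (x : ℝ) : minSqDist α x ≤ (x - a) ^ 2 :=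
  csInf_le ⟨0, by rintro _ ⟨b, -, rfl⟩; positivity⟩ ⟨a, ha, rfl⟩

theorem minSqDist_apply_le {f : ℝ → ℝ} {c : ℝ} (hf : ∀ x y, f x - f y = c * (x - y))
    {α γ : Finset ℝ} (hα : α.Nonempty) (hαγ : α.image f ⊆ γ) (x : ℝ) :
    minSqDist γ (f x) ≤ c ^ 2 * minSqDist α x := by
  obtain ⟨a, ha, hmin⟩ := α.exists_mem_eq_inf' hα fun a => (x - a) ^ 2
  calc minSqDist γ (f x) ≤ (f x - f a) ^ 2 := minSqDist_le (hαγ (Finset.mem_image_of_mem f ha)) _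
    _ = c ^ 2 * minSqDist α x := by rw [minSqDist_eq_inf' hα, hmin, hf]; ring

theorem quantErr_le_integral (P : Measure ℝ) {n : ℕ} {α : Finset ℝ} (hα : α.Nonempty)
    (hcard : α.card ≤ n) : quantErr P n ≤ ∫ x, minSqDist α x ∂P :=
  csInf_le ⟨0, by rintro _ ⟨β, -, -, rfl⟩; exact integral_nonneg (minSqDist_nonneg β)⟩
    ⟨α, hα, hcard, rfl⟩

theorem exists_integral_minSqDist_le (P : Measure ℝ) {n : ℕ} (hn : 1 ≤ n) {ε : ℝ}
    (hε : 0 < ε) : ∃ α : Finset ℝ, α.Nonempty ∧ α.card ≤ n ∧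
      ∫ x, minSqDist α x ∂P ≤ quantErr P n + ε := by
  obtain ⟨_, ⟨α, hα, hcard, rfl⟩, hlt⟩ := Real.lt_sInf_add_pos
    (s := {e | ∃ α : Finset ℝ, α.Nonempty ∧ α.card ≤ n ∧ e = ∫ x, minSqDist α x ∂P})
    ⟨_, {0}, Finset.singleton_nonempty 0, by simpa using hn, rfl⟩ hε
  exact ⟨α, hα, hcard, hlt.le⟩

section CantorMeasure

variable {r : ℝ} {P : Measure ℝ}

theorem continuous_Smap (r : ℝ) (i : Fin 2) : Continuous (Smap r i) := by
  unfold Smap; split_ifs <;> fun_prop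

theorem Smap_sub_Smap (r : ℝ) (i : Fin 2) (x y : ℝ) :
    Smap r i x - Smap r i y = r * (x - y) := by
  unfold Smap; split_ifs <;> ring

theorem abs_Smap_sub_half_sub_half_le (hr0 : 0 < r) (hr1 : r < 1) (i : Fin 2) (x : ℝ) :
    |Smap r i x - 1 / 2| - 1 / 2 ≤ r * (|x - 1 / 2| - 1 / 2) := by
  unfold Smap
  split_ifs <;> cases abs_cases (x - 1 / 2) <;> cases abs_cases (r * x - 1 / 2) <;>
    cases abs_cases (r * x + (1 - r) - 1 / 2) <;> nlinarith

def IsSelfSimilar (r : ℝ) (P : Measure ℝ) : Prop :=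
  P = (2 : ℝ≥0∞)⁻¹ • P.map (Smap r 0) + (2 : ℝ≥0∞)⁻¹ • P.map (Smap r 1)

namespace IsSelfSimilar

theorem measure_le (hP : IsSelfSimilar r P) {s t : Set ℝ} (hs : MeasurableSet s)
    (hst : ∀ i, Smap r i ⁻¹' s ⊆ t) : P s ≤ P t := by
  conv_lhs => rw [hP]
  simp only [Measure.add_apply, Measure.smul_apply, smul_eq_mul,
    Measure.map_apply (continuous_Smap r _).measurable hs]
  calc 2⁻¹ * P (Smap r 0 ⁻¹' s) + 2⁻¹ * P (Smap r 1 ⁻¹' s) ≤ 2⁻¹ * P t + 2⁻¹ * P t := by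
        gcongr <;> exact hst _
    _ = P t := by rw [← add_mul, ENNReal.inv_two_add_inv_two, one_mul]

theorem ae_mem_Icc [IsFiniteMeasure P] (hP : IsSelfSimilar r P) (hr0 : 0 < r) (hr1 : r < 1) :
    ∀ᵐ x ∂P, x ∈ Icc 0 1 := by
  have hv : Measurable fun x : ℝ => |x - 1 / 2| - 1 / 2 := by fun_prop
  have hnull := measure_setOf_pos_eq_zero_of_le_div P hv hr0 hr1 fun t _ =>
    hP.measure_le (measurableSet_lt measurable_const hv) fun i x hx => by
      have := abs_Smap_sub_half_sub_half_le hr0 hr1 i x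
      simp only [mem_preimage, mem_ofPred_eq] at hx ⊢
      rw [div_lt_iff₀ hr0]
      linarith
  have hae : ∀ᵐ x ∂P, |x - 1 / 2| - 1 / 2 ≤ 0 := by
    rw [ae_iff]
    simpa only [not_le] using hnull
  filter_upwards [hae] with x hx
  constructor <;> linarith [le_abs_self (x - 1 / 2), neg_abs_le (x - 1 / 2)]

theorem integrable [IsFiniteMeasure P] (hP : IsSelfSimilar r P) (hr0 : 0 < r) (hr1 : r < 1)
    {f : ℝ → ℝ} (hf : Continuous f) : Integrable f P := by
  rw [← Measure.restrict_eq_self_of_ae_mem (hP.ae_mem_Icc hr0 hr1)]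
  exact hf.continuousOn.integrableOn_Icc

theorem integral_eq [IsFiniteMeasure P] (hP : IsSelfSimilar r P) (hr0 : 0 < r) (hr1 : r < 1)
    {f : ℝ → ℝ} (hf : Continuous f) :
    ∫ x, f x ∂P = 2⁻¹ * ∫ x, f (Smap r 0 x) ∂P + 2⁻¹ * ∫ x, f (Smap r 1 x) ∂P := by
  have hmap : ∀ i, Integrable f (P.map (Smap r i)) := fun i =>
    (integrable_map_measure hf.aestronglyMeasurable (continuous_Smap r i).aemeasurable).2
      (hP.integrable hr0 hr1 (hf.comp (continuous_Smap r i)))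
  conv_lhs => rw [hP]
  rw [integral_add_measure ((hmap 0).smul_measure (by simp)) ((hmap 1).smul_measure (by simp)),
    integral_smul_measure, integral_smul_measure,
    integral_map (continuous_Smap r 0).aemeasurable hf.aestronglyMeasurable,
    integral_map (continuous_Smap r 1).aemeasurable hf.aestronglyMeasurable]
  simp [ENNReal.toReal_inv, smul_eq_mul]

theorem integral_minSqDist_union_image_le [IsFiniteMeasure P] (hP : IsSelfSimilar r P)
    (hr0 : 0 < r) (hr1 : r < 1)
    {α β : Finset ℝ} (hα : α.Nonempty) (hβ : β.Nonempty) :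
    ∫ x, minSqDist (α.image (Smap r 0) ∪ β.image (Smap r 1)) x ∂P ≤
      1 / 2 * r ^ 2 * (∫ x, minSqDist α x ∂P + ∫ x, minSqDist β x ∂P) := by
  set γ := α.image (Smap r 0) ∪ β.image (Smap r 1)
  have hγ : γ.Nonempty := (hα.image _).mono Finset.subset_union_left
  have hpiece : ∀ i δ, δ.Nonempty → δ.image (Smap r i) ⊆ γ →
      ∫ x, minSqDist γ (Smap r i x) ∂P ≤ r ^ 2 * ∫ x, minSqDist δ x ∂P := fun i δ hδ hδγ => by
    rw [← integral_const_mul]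
    exact integral_mono
      (hP.integrable hr0 hr1 ((continuous_minSqDist hγ).comp (continuous_Smap r i)))
      ((hP.integrable hr0 hr1 (continuous_minSqDist hδ)).const_mul _)
      (minSqDist_apply_le (Smap_sub_Smap r i) hδ hδγ)
  rw [hP.integral_eq hr0 hr1 (continuous_minSqDist hγ)]
  calc 2⁻¹ * ∫ x, minSqDist γ (Smap r 0 x) ∂P + 2⁻¹ * ∫ x, minSqDist γ (Smap r 1 x) ∂P
      ≤ 2⁻¹ * (r ^ 2 * ∫ x, minSqDist α x ∂P) + 2⁻¹ * (r ^ 2 * ∫ x, minSqDist β x ∂P) := by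
        gcongr
        · exact hpiece 0 α hα Finset.subset_union_left
        · exact hpiece 1 β hβ Finset.subset_union_right
    _ = _ := by ring

end IsSelfSimilar

end CantorMeasure

theorem stmt16_general (r : ℝ) (hr1 : 0 < r) (hr2 : r < 1/2)
    (P : Measure ℝ) [IsProbabilityMeasure P]
    (hP : P = (2 : ℝ≥0∞)⁻¹ • P.map (Smap r 0) + (2 : ℝ≥0∞)⁻¹ • P.map (Smap r 1))
    (n j : ℕ) (hj1 : 1 ≤ j) (hj2 : j ≤ n - 1) :
    quantErr P n ≤ (1/2) * r^2 * (quantErr P j + quantErr P (n - j)) := by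
  have hr : r < 1 := by linarith
  refine le_of_forall_pos_le_add fun ε hε => ?_
  obtain ⟨α, hα, hαcard, hαε⟩ := exists_integral_minSqDist_le P hj1 hε
  obtain ⟨β, hβ, hβcard, hβε⟩ := exists_integral_minSqDist_le P (show 1 ≤ n - j by omega) hε
  have hcard : (α.image (Smap r 0) ∪ β.image (Smap r 1)).card ≤ n :=
    calc _ ≤ α.card + β.card := (Finset.card_union_le _ _).trans
          (add_le_add Finset.card_image_le Finset.card_image_le)
      _ ≤ n := by omega
  have hr_sq : r ^ 2 ≤ 1 := by nlinarith
  calc quantErr P n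
      ≤ _ := quantErr_le_integral P ((hα.image _).mono Finset.subset_union_left) hcard
    _ ≤ 1 / 2 * r ^ 2 * (∫ x, minSqDist α x ∂P + ∫ x, minSqDist β x ∂P) :=
        IsSelfSimilar.integral_minSqDist_union_image_le hP hr1 hr hα hβ
    _ ≤ 1 / 2 * r ^ 2 * (quantErr P j + ε + (quantErr P (n - j) + ε)) := by gcongr
    _ ≤ 1 / 2 * r ^ 2 * (quantErr P j + quantErr P (n - j)) + ε := by nlinarith

theorem stmt16 (r : ℝ) (hr1 : 0 < r) (hr2 : r < 1/2)
    (P : Measure ℝ) [IsProbabilityMeasure P]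
    (hP : P = (2 : ℝ≥0∞)⁻¹ • P.map (Smap r 0) + (2 : ℝ≥0∞)⁻¹ • P.map (Smap r 1))
    (n j : ℕ) (hn : 1 ≤ n) (hj1 : 1 ≤ j) (hj2 : j ≤ n - 1) :
    quantErr P n ≤ (1/2) * r^2 * (quantErr P j + quantErr P (n - j)) :=
  stmt16_general r hr1 hr2 P hP n j hj1 hj2
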